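/- Let n ≥ 5, let g be a nondegenerate symmetric bilinear form on an n-dimensional real vector space V, and let h be a diagonalizable endomorphism of V that is g-self-adjoint (g(hx,y) = g(x,hy)), with tr h = 1, satisfying h∘h − (tr(h∘h)/n)·id = H·(h − (1/n)·id) for some real H. Suppose λ := (n−3)/(2(n−2)) is an eigenvalue of h whose eigenspace is one-dimensional, spanned by α ≠ 0. Then g(α,α) ≠ 0, and for any real numbers r and G the endomorphism R := (r/n)·id + G·(h − (1/n)·id) satisfies, for all x ∈ V: R x − (r/n)·x = (G/2)·((n−4)/(n−2))·( (g(α,x)/g(α,α))·α − (1/n)·x ). In particular R − (r/n)·id − (G/2)·((n−4)/(n−2))·(−1/n)·id has rank one (the quasi-Einstein property). -/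

import Mathlib

/-- The distinguished eigenvalue `λ = (n−3)/(2(n−2))`. -/
noncomputable def lamVal (n : ℕ) : ℝ := ((n : ℝ) - 3) / (2 * ((n : ℝ) - 2))

set_option maxHeartbeats 2000000 in
/-- if the eigenspace of `h` for `λ = (n−3)/(2(n−2))` is
one-dimensional, spanned by `α ≠ 0`, then `g(α,α) ≠ 0` and the Ricci-type
endomorphism `R = (r/n)·id + G·(h − (1/n)·id)` satisfies the quasi-Einstein
identity `R x − (r/n)·x = (G/2)((n−4)/(n−2))·((g(α,x)/g(α,α))·α − (1/n)·x)`;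
in particular `R − (r/n)·id + (G/(2n))((n−4)/(n−2))·id` has rank at most one. -/
theorem quasi_einstein_of_simple_eigenvalue
    (V : Type) [AddCommGroup V] [Module ℝ V] [FiniteDimensional ℝ V]
    (n : ℕ) (hn : 5 ≤ n) (hdim : Module.finrank ℝ V = n)
    (g : V →ₗ[ℝ] V →ₗ[ℝ] ℝ)
    (hgsymm : ∀ x y : V, g x y = g y x)
    (hgnd : ∀ x : V, (∀ y : V, g x y = 0) → x = 0)
    (h : V →ₗ[ℝ] V)
    (hdiag : ∃ (ι : Type) (bV : Module.Basis ι ℝ V) (μ : ι → ℝ), ∀ i, h (bV i) = μ i • bV i)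
    (hsa : ∀ x y : V, g (h x) y = g x (h y))
    (htrace : LinearMap.trace ℝ V h = 1)
    (H : ℝ)
    (heq : h ∘ₗ h - ((LinearMap.trace ℝ V (h ∘ₗ h)) / (n : ℝ)) • LinearMap.id =
      H • (h - (1 / (n : ℝ)) • LinearMap.id))
    (α : V) (hα : α ≠ 0)
    (heigsp : Module.End.eigenspace h (lamVal n) = Submodule.span ℝ {α}) :
    g α α ≠ 0 ∧
    ∀ r G : ℝ,
      (∀ x : V,
        ((r / (n : ℝ)) • x + G • (h x - (1 / (n : ℝ)) • x)) - (r / (n : ℝ)) • x =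
          ((G / 2) * (((n : ℝ) - 4) / ((n : ℝ) - 2))) •
            ((g α x / g α α) • α - (1 / (n : ℝ)) • x)) ∧
      LinearMap.rank
        (((r / (n : ℝ)) • (LinearMap.id : V →ₗ[ℝ] V) +
            G • (h - (1 / (n : ℝ)) • LinearMap.id)) -
          (r / (n : ℝ)) • (LinearMap.id : V →ₗ[ℝ] V) -
          ((G / 2) * (((n : ℝ) - 4) / ((n : ℝ) - 2)) * (-(1 / (n : ℝ)))) •
            (LinearMap.id : V →ₗ[ℝ] V)) ≤ 1 := by
  classical
  obtain ⟨ι, bV, μ, hbV⟩ := hdiag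
  haveI : Fintype ι := FiniteDimensional.fintypeBasisIndex bV
  set N : ℝ := (n : ℝ) with hNdef
  have hN5 : (5 : ℝ) ≤ N := by rw [hNdef]; exact_mod_cast hn
  have hN0 : N ≠ 0 := by linarith
  have hN1 : N - 1 ≠ 0 := by linarith
  have hN2 : N - 2 ≠ 0 := by linarith
  have hcard : Fintype.card ι = n := by
    rw [← hdim, Module.finrank_eq_card_basis bV]
  -- α is an eigenvector
  have hαmem : α ∈ Module.End.eigenspace h (lamVal n) := by
    rw [heigsp]; exact Submodule.mem_span_singleton_self α
  have hαeig : h α = lamVal n • α := Module.End.mem_eigenspace_iff.mp hαmem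
  set T := LinearMap.trace ℝ V (h ∘ₗ h) with hT
  -- every eigenvalue satisfies the quadratic equation
  have eigen_eq : ∀ (v : V) (ν : ℝ), v ≠ 0 → h v = ν • v →
      ν ^ 2 - T / N = H * (ν - 1 / N) := by
    intro v ν hv hvv
    have h2 := congrArg (fun L : V →ₗ[ℝ] V => L v) heq
    simp only [LinearMap.sub_apply, LinearMap.smul_apply, LinearMap.comp_apply,
      LinearMap.id_apply, hvv, map_smul] at h2
    have h3 : (ν ^ 2 - T / N - H * (ν - 1 / N)) • v =
        (ν • ν • v - (T / N) • v) - H • (ν • v - (1 / N) • v) := by module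
    rw [h2, sub_self] at h3
    rcases smul_eq_zero.mp h3 with h4 | h4
    · linarith [h4]
    · exact absurd h4 hv
  have e2 := eigen_eq α (lamVal n) hα hαeig
  -- dichotomy for eigenvalues
  have hdich : ∀ i, μ i = lamVal n ∨ μ i = H - lamVal n := by
    intro i
    have e1 := eigen_eq (bV i) (μ i) (bV.ne_zero i) (hbV i)
    have e3 : (μ i - lamVal n) * (μ i - (H - lamVal n)) = 0 := by
      linear_combination e1 - e2
    rcases mul_eq_zero.mp e3 with h4 | h4
    · left; linarith
    · right; linarith
  -- existence of the distinguished index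
  have key : ∀ j, μ j * bV.repr α j = lamVal n * bV.repr α j := by
    intro j
    have hha : h α = ∑ i, (μ i * bV.repr α i) • bV i := by
      conv_lhs => rw [← bV.sum_repr α]
      rw [map_sum]
      refine Finset.sum_congr rfl fun i _ => ?_
      rw [map_smul, hbV i, smul_smul, mul_comm]
    have h5 : bV.repr (h α) j = lamVal n * bV.repr α j := by
      rw [hαeig, map_smul]; simp
    rw [hha] at h5
    rw [← h5]
    have := bV.repr_sum_self (fun i => μ i * bV.repr α i)
    rw [this]
  obtain ⟨i₀, hi₀⟩ : ∃ j, bV.repr α j ≠ 0 := by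
    by_contra hcon
    push_neg at hcon
    exact hα (bV.repr.map_eq_zero_iff.mp (Finsupp.ext hcon))
  have hμi₀ : μ i₀ = lamVal n := mul_right_cancel₀ hi₀ (key i₀)
  -- uniqueness of the distinguished index
  have huniq : ∀ j, μ j = lamVal n → j = i₀ := by
    intro j hj
    by_contra hne
    have hmemj : bV j ∈ Submodule.span ℝ {α} := by
      rw [← heigsp]
      exact Module.End.mem_eigenspace_iff.mpr (by rw [hbV j, hj])
    have hmemi : bV i₀ ∈ Submodule.span ℝ {α} := by
      rw [← heigsp]
      exact Module.End.mem_eigenspace_iff.mpr (by rw [hbV i₀, hμi₀])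
    obtain ⟨a, ha⟩ := Submodule.mem_span_singleton.mp hmemj
    obtain ⟨b, hb⟩ := Submodule.mem_span_singleton.mp hmemi
    have hcomm : b • bV j = a • bV i₀ := by
      rw [← ha, ← hb, smul_comm]
    have h6 := congrArg (fun v => bV.repr v j) hcomm
    simp only [map_smul, Finsupp.smul_apply, Module.Basis.repr_self,
      Finsupp.single_apply, smul_eq_mul] at h6
    rw [if_neg (fun hcc : i₀ = j => hne hcc.symm)] at h6
    have hb0 : b = 0 := by simpa using h6
    rw [hb0, zero_smul] at hb
    exact bV.ne_zero i₀ hb.symm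
  have hμj : ∀ j, j ≠ i₀ → μ j = H - lamVal n := by
    intro j hj
    rcases hdich j with h7 | h7
    · exact absurd (huniq j h7) hj
    · exact h7
  -- trace computation
  have htr : ∑ i, μ i = 1 := by
    rw [← htrace, LinearMap.trace_eq_matrix_trace ℝ bV h]
    simp [Matrix.trace, Matrix.diag, LinearMap.toMatrix_apply, hbV]
  have hsum : lamVal n + (N - 1) * (H - lamVal n) = 1 := by
    have hsplit : ∑ i, μ i = μ i₀ + ∑ j ∈ Finset.univ.erase i₀, μ j :=
      (Finset.add_sum_erase _ _ (Finset.mem_univ i₀)).symm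
    have hconst : ∑ j ∈ Finset.univ.erase i₀, μ j =
        ((n - 1 : ℕ) : ℝ) * (H - lamVal n) := by
      rw [Finset.sum_congr rfl (fun j hj => hμj j (Finset.ne_of_mem_erase hj)),
        Finset.sum_const, Finset.card_erase_of_mem (Finset.mem_univ i₀),
        Finset.card_univ, hcard, nsmul_eq_mul]
    have hc1 : ((n - 1 : ℕ) : ℝ) = N - 1 := by
      rw [hNdef, Nat.cast_sub (by omega), Nat.cast_one]
    have hfin : ∑ i, μ i = lamVal n + (N - 1) * (H - lamVal n) := by
      rw [hsplit, hμi₀, hconst, hc1]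
    rw [← hfin]
    exact htr
  have hμval : H - lamVal n = 1 / (2 * (N - 2)) := by
    have h8 : (N - 1) * (H - lamVal n) = 1 - lamVal n := by linarith
    have h9 : 1 - lamVal n = (N - 1) * (1 / (2 * (N - 2))) := by
      simp only [lamVal, ← hNdef]
      field_simp
      ring
    rw [h9] at h8
    exact mul_left_cancel₀ hN1 h8
  set μ₂ : ℝ := 1 / (2 * (N - 2)) with hμ₂
  set k : ℝ := (N - 4) / (2 * (N - 2)) with hk
  have hlamne : lamVal n ≠ H - lamVal n := by
    rw [hμval]
    simp only [lamVal, ← hNdef, hμ₂]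
    intro hc
    rw [div_eq_div_iff (by intro hc2; apply hN2; linarith)
      (by intro hc2; apply hN2; linarith)] at hc
    have : N = 4 := by nlinarith
    linarith
  -- orthogonality
  have horth : ∀ j, j ≠ i₀ → g (bV i₀) (bV j) = 0 := by
    intro j hj
    have e1 : g (h (bV i₀)) (bV j) = g (bV i₀) (h (bV j)) := hsa _ _
    rw [hbV, hbV, hμi₀, hμj j hj, map_smul, map_smul] at e1
    simp only [LinearMap.smul_apply, smul_eq_mul] at e1
    have hfac : (lamVal n - (H - lamVal n)) * g (bV i₀) (bV j) = 0 := by linarith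
    rcases mul_eq_zero.mp hfac with h10 | h10
    · exact absurd (by linarith : lamVal n = H - lamVal n) hlamne
    · exact h10
  -- bV i₀ is a multiple of α
  obtain ⟨c, hc⟩ : ∃ c : ℝ, c • α = bV i₀ := by
    apply Submodule.mem_span_singleton.mp
    rw [← heigsp]
    exact Module.End.mem_eigenspace_iff.mpr (by rw [hbV i₀, hμi₀])
  have hc0 : c ≠ 0 := by
    intro hc0
    rw [hc0, zero_smul] at hc
    exact bV.ne_zero i₀ hc.symm
  -- g α α ≠ 0
  have hgα : g α α ≠ 0 := by
    intro h0
    have hz : ∀ j, g (bV i₀) (bV j) = 0 := by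
      intro j
      by_cases hj : j = i₀
      · subst hj
        rw [← hc]
        simp [h0]
      · exact horth j hj
    have hzero : g (bV i₀) = 0 := by
      apply bV.ext
      intro j
      rw [hz j]; rfl
    exact bV.ne_zero i₀ (hgnd _ (fun y => by rw [hzero]; rfl))
  have hgαj : ∀ j, j ≠ i₀ → g α (bV j) = 0 := by
    intro j hj
    have hcm : c * g α (bV j) = 0 := by
      rw [← horth j hj, ← hc, map_smul, LinearMap.smul_apply, smul_eq_mul]
    rcases mul_eq_zero.mp hcm with h11 | h11
    · exact absurd h11 hc0
    · exact h11
  have hgαi₀ : g α (bV i₀) = c * g α α := by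
    rw [← hc, map_smul, smul_eq_mul]
  -- the rank-one projection map
  set Q : V →ₗ[ℝ] V := (g α α)⁻¹ • (LinearMap.smulRight (g α) α) with hQ
  have hQapp : ∀ x, Q x = (g α x / g α α) • α := by
    intro x
    rw [hQ]
    simp only [LinearMap.smul_apply, LinearMap.smulRight_apply, smul_smul,
      div_eq_inv_mul]
  -- scalar identities
  have hs1 : lamVal n - 1 / N = k - k * (1 / N) := by
    simp only [lamVal, ← hNdef, hk]
    field_simp
    ring
  have hs2 : μ₂ - 1 / N = -(k * (1 / N)) := by
    simp only [hμ₂, hk]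
    field_simp
    ring
  -- the key linear-map identity
  have hmap : h - (1 / N) • LinearMap.id = k • (Q - (1 / N) • LinearMap.id) := by
    apply bV.ext
    intro j
    simp only [LinearMap.sub_apply, LinearMap.smul_apply, LinearMap.id_apply]
    by_cases hj : j = i₀
    · rw [hj]
      have hQi₀ : Q (bV i₀) = bV i₀ := by
        rw [hQapp, hgαi₀, mul_div_assoc, div_self hgα, mul_one, hc]
      rw [hbV, hμi₀, hQi₀, smul_sub, smul_smul, ← sub_smul, ← sub_smul, hs1]
    · have hQj : Q (bV j) = 0 := by
        rw [hQapp, hgαj j hj, zero_div, zero_smul]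
      rw [hbV, hμj j hj, hμval, hQj, zero_sub, smul_neg, smul_smul,
        ← sub_smul, hs2, neg_smul]
  have hmapx : ∀ x : V, h x - (1 / N) • x = k • ((g α x / g α α) • α - (1 / N) • x) := by
    intro x
    have h12 := LinearMap.ext_iff.mp hmap x
    simp only [LinearMap.sub_apply, LinearMap.smul_apply, LinearMap.id_apply] at h12
    rw [h12, hQapp]
  have hGk : ∀ G : ℝ, (G / 2) * ((N - 4) / (N - 2)) = G * k := by
    intro G
    rw [hk]
    field_simp
  refine ⟨hgα, fun r G => ⟨fun x => ?_, ?_⟩⟩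
  · rw [add_sub_cancel_left, hmapx x, smul_smul, hGk G]
  · have hOx : ∀ x : V,
        ((((r / N) • (LinearMap.id : V →ₗ[ℝ] V) + G • (h - (1 / N) • (LinearMap.id : V →ₗ[ℝ] V))) -
          (r / N) • (LinearMap.id : V →ₗ[ℝ] V) -
          ((G / 2) * ((N - 4) / (N - 2)) * (-(1 / N))) •
            (LinearMap.id : V →ₗ[ℝ] V)) x) =
          (G * k * (g α x / g α α)) • α := by
      intro x
      simp only [LinearMap.sub_apply, LinearMap.add_apply, LinearMap.smul_apply,
        LinearMap.id_apply]
      rw [hmapx x, hGk G]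
      module
    have hrange : LinearMap.range
        ((((r / N) • (LinearMap.id : V →ₗ[ℝ] V) + G • (h - (1 / N) • (LinearMap.id : V →ₗ[ℝ] V))) -
          (r / N) • (LinearMap.id : V →ₗ[ℝ] V) -
          ((G / 2) * ((N - 4) / (N - 2)) * (-(1 / N))) •
            (LinearMap.id : V →ₗ[ℝ] V))) ≤ Submodule.span ℝ {α} := by
      rintro y ⟨x, rfl⟩
      rw [hOx x]
      exact Submodule.smul_mem _ _ (Submodule.mem_span_singleton_self α)
    refine le_trans (Submodule.rank_mono hrange) ?_
    simpa using rank_span_le (R := ℝ) ({α} : Set V)
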